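/- arXiv:1009.3544 — 4 statements merged into one kernel-verified Lean document; each statement's English description precedes it below -/
import Mathlib

section
/- For every t ∈ ℝ, the characteristic function of the Laplace distribution satisfies (1 + t²)^{-1} = exp( ∫_{ℝ∖{0}} (cos(tx) − 1) · e^{-|x|}/|x| dx ); moreover ∫_ℝ e^{itx} · (1/2) e^{-|x|} dx = (1 + t²)^{-1}. -/
/-!
The exponent has an even integrand, and on `(0, ∞)` we write
`(1 - cos (t x)) / x = ∫₀ᵗ sin (s x) ds`. By Fubini the exponent becomes
`-2 ∫₀ᵗ (∫₀^∞ sin (s x) e^{-x} dx) ds = -2 ∫₀ᵗ s / (1 + s²) ds = -log (1 + t²)`.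
Both this inner integral and the characteristic function come from the complex exponential
integrals `∫₀^∞ e^{(-1 + i s) x} dx = 1 / (1 - i s)` and
`∫_{-∞}^0 e^{(1 + i s) x} dx = 1 / (1 + i s)`.
-/

open MeasureTheory Set Filter

lemma integral_exp_neg_one_add_mul_I_Ioi (s : ℝ) :
    ∫ x in Ioi (0 : ℝ), Complex.exp ((-1 + s * Complex.I) * x) = 1 / (1 - s * Complex.I) := by
  rw [integral_exp_mul_complex_Ioi (by simp)]
  simp only [Complex.ofReal_zero, mul_zero, Complex.exp_zero]
  rw [← neg_div_neg_eq, neg_neg, neg_add', neg_neg]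

lemma integral_exp_one_add_mul_I_Iic (s : ℝ) :
    ∫ x in Iic (0 : ℝ), Complex.exp ((1 + s * Complex.I) * x) = 1 / (1 + s * Complex.I) := by
  rw [integral_exp_mul_complex_Iic (by simp)]
  simp

lemma integral_sin_mul_mul_exp_neg_Ioi (s : ℝ) :
    ∫ x in Ioi (0 : ℝ), Real.sin (s * x) * Real.exp (-x) = s / (1 + s ^ 2) := by
  have h := congrArg Complex.im (integral_exp_neg_one_add_mul_I_Ioi s)
  rw [← RCLike.im_to_complex, ← integral_im (integrableOn_exp_mul_complex_Ioi (by simp) 0)] at h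
  convert h using 1
  · exact setIntegral_congr_fun measurableSet_Ioi fun x _ => by simp [Complex.exp_im, mul_comm]
  · simp [Complex.normSq_apply, sq]

lemma integral_sin_mul_const (x t : ℝ) (hx : x ≠ 0) :
    ∫ s in (0 : ℝ)..t, Real.sin (s * x) = (1 - Real.cos (t * x)) / x := by
  rw [intervalIntegral.integral_comp_mul_right _ hx, integral_sin]
  simp only [zero_mul, Real.cos_zero, smul_eq_mul]
  ring

lemma integral_div_one_add_sq (t : ℝ) :
    ∫ s in (0 : ℝ)..t, s / (1 + s ^ 2) = Real.log (1 + t ^ 2) / 2 := by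
  have hderiv (s : ℝ) : HasDerivAt (fun s => Real.log (1 + s ^ 2) / 2) (s / (1 + s ^ 2)) s :=
    ((((hasDerivAt_pow 2 s).const_add 1).log (by positivity)).div_const 2).congr_deriv
      (by push_cast; ring)
  rw [intervalIntegral.integral_eq_sub_of_hasDerivAt (fun s _ => hderiv s)]
  · simp
  · exact (continuous_id.div (by fun_prop) fun s => by positivity).intervalIntegrable _ _

lemma integrable_sin_mul_mul_exp_neg_prod (t : ℝ) :
    Integrable (Function.uncurry fun s x => Real.sin (s * x) * Real.exp (-x))
      ((volume.restrict (uIoc 0 t)).prod (volume.restrict (Ioi 0))) := by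
  have : IsFiniteMeasure (volume.restrict (uIoc 0 t)) := Real.isFiniteMeasure_restrict_Ioc _ _
  refine Integrable.mono' ((integrable_const (1 : ℝ)).mul_prod
    (exp_neg_integrableOn_Ioi 0 one_pos)) ?_ (Eventually.of_forall fun ⟨s, x⟩ => ?_)
  · exact ((Real.continuous_sin.comp (continuous_fst.mul continuous_snd)).mul
      (Real.continuous_exp.comp continuous_snd.neg)).aestronglyMeasurable
  · simp only [Function.uncurry_apply_pair, norm_mul, Real.norm_eq_abs, Real.abs_exp, neg_mul,
      one_mul]
    exact mul_le_of_le_one_left (Real.exp_pos _).le (Real.abs_sin_le_one _)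

lemma integral_cos_sub_one_mul_exp_neg_div_Ioi (t : ℝ) :
    ∫ x in Ioi (0 : ℝ), (Real.cos (t * x) - 1) * Real.exp (-x) / x
      = -(Real.log (1 + t ^ 2) / 2) := by
  have hpointwise : ∀ x ∈ Ioi (0 : ℝ), (Real.cos (t * x) - 1) * Real.exp (-x) / x
      = -∫ s in (0 : ℝ)..t, Real.sin (s * x) * Real.exp (-x) := by
    intro x hx
    rw [intervalIntegral.integral_mul_const, integral_sin_mul_const x t (ne_of_gt hx)]
    field_simp
    ring
  calc _ = -∫ x in Ioi (0 : ℝ), ∫ s in (0 : ℝ)..t, Real.sin (s * x) * Real.exp (-x) := by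
        rw [setIntegral_congr_fun measurableSet_Ioi hpointwise, integral_neg]
    _ = -∫ s in (0 : ℝ)..t, ∫ x in Ioi (0 : ℝ), Real.sin (s * x) * Real.exp (-x) := by
        rw [intervalIntegral_integral_swap (integrable_sin_mul_mul_exp_neg_prod t)]
    _ = -∫ s in (0 : ℝ)..t, s / (1 + s ^ 2) := by
        simp only [integral_sin_mul_mul_exp_neg_Ioi]
    _ = _ := by rw [integral_div_one_add_sq]

lemma integral_exp_mul_I_mul_exp_neg_abs (t : ℝ) :
    ∫ x : ℝ, Complex.exp (t * x * Complex.I) * Real.exp (-|x|) = 2 / (1 + t ^ 2) := by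
  have hleft : EqOn (fun x : ℝ => Complex.exp (t * x * Complex.I) * Real.exp (-|x|))
      (fun x : ℝ => Complex.exp ((1 + t * Complex.I) * x)) (Iic 0) := by
    intro x hx
    simp only [abs_of_nonpos (show x ≤ 0 from hx), neg_neg, Complex.ofReal_exp,
      ← Complex.exp_add]
    ring_nf
  have hright : EqOn (fun x : ℝ => Complex.exp (t * x * Complex.I) * Real.exp (-|x|))
      (fun x : ℝ => Complex.exp ((-1 + t * Complex.I) * x)) (Ioi 0) := by
    intro x hx
    simp only [abs_of_pos (show 0 < x from hx), Complex.ofReal_exp, Complex.ofReal_neg,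
      ← Complex.exp_add]
    ring_nf
  rw [← intervalIntegral.integral_Iic_add_Ioi
    ((integrableOn_exp_mul_complex_Iic (by simp) 0).congr_fun hleft.symm measurableSet_Iic)
    ((integrableOn_exp_mul_complex_Ioi (by simp) 0).congr_fun hright.symm measurableSet_Ioi),
    setIntegral_congr_fun measurableSet_Iic hleft, setIntegral_congr_fun measurableSet_Ioi hright,
    integral_exp_one_add_mul_I_Iic, integral_exp_neg_one_add_mul_I_Ioi]
  have hne_add : (1 + t * Complex.I) ≠ 0 := fun h => by simpa using congrArg Complex.re h
  have hne_sub : (1 - t * Complex.I) ≠ 0 := fun h => by simpa using congrArg Complex.re h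
  have hfactor : (1 + (t : ℂ) ^ 2) = (1 + t * Complex.I) * (1 - t * Complex.I) := by
    linear_combination (t : ℂ) ^ 2 * Complex.I_sq
  rw [hfactor]
  field_simp
  ring

theorem stmt2 (t : ℝ) :
    (1 + t ^ 2)⁻¹ =
      Real.exp (∫ x in {(0 : ℝ)}ᶜ, (Real.cos (t * x) - 1) * Real.exp (-|x|) / |x|) ∧
    ∫ x : ℝ, Complex.exp (t * x * Complex.I) * ((1 / 2 : ℝ) * Real.exp (-|x|) : ℝ) =
      ((1 + t ^ 2)⁻¹ : ℝ) := by
  constructor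
  · have heven : (fun x : ℝ => (Real.cos (t * x) - 1) * Real.exp (-|x|) / |x|)
        = fun x => (fun y => (Real.cos (t * y) - 1) * Real.exp (-y) / y) |x| := by
      ext x
      rcases abs_choice x with h | h <;> simp [h]
    rw [restrict_compl_singleton, heven,
      integral_comp_abs (f := fun y => (Real.cos (t * y) - 1) * Real.exp (-y) / y),
      integral_cos_sub_one_mul_exp_neg_div_Ioi, mul_neg, mul_div_cancel₀ _ two_ne_zero,
      Real.exp_neg, Real.exp_log (by positivity)]
  · simp_rw [Complex.ofReal_mul, mul_left_comm _ ((1 / 2 : ℝ) : ℂ)]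
    rw [integral_const_mul, integral_exp_mul_I_mul_exp_neg_abs]
    push_cast
    field_simp
end

section
/- Let (z_k)_{k≥1} be positive reals with ∑_{k=1}^∞ 1/z_k² < ∞. Then for every t ∈ ℝ, ∏_{k=1}^∞ (1 + t²/z_k²)^{-1} = exp( − ∫_{ℝ∖{0}} (1 − cos(tx)) · ( ∑_{k=1}^∞ e^{-z_k |x|} ) / |x| dx ), where the integral on the right is finite. -/
/-!
Differentiating in `t` under the integral sign and using the Laplace transform
`∫₀^∞ e^{-zx} sin(tx) dx = t / (z² + t²)` gives the Frullani-type integral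
`∫₀^∞ (1 - cos tx) e^{-zx} dx / x = log(1 + t²/z²) / 2`; the integrand is even, so over `ℝ`
it is `log(1 + t²/z²)`. These summands are nonnegative with summable integrals
(`log(1 + u) ≤ u`), so the series may be integrated termwise, and exponentiating
`-∑ log(1 + t²/z_k²)` gives the product.
-/

open MeasureTheory Real Set Filter

theorem integral_exp_neg_mul_mul_sin_Ioi {z : ℝ} (hz : 0 < z) (s : ℝ) :
    ∫ x in Ioi (0 : ℝ), exp (-z * x) * sin (s * x) = s / (z ^ 2 + s ^ 2) := by
  -- the imaginary part of `∫₀^∞ e^{(-z + is)x} dx = 1 / (z - is)`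
  have ha : (-z + s * Complex.I).re < 0 := by simpa using hz
  calc ∫ x in Ioi (0 : ℝ), exp (-z * x) * sin (s * x)
      = ∫ x in Ioi (0 : ℝ), (Complex.exp ((-z + s * Complex.I) * x)).im := by
        refine setIntegral_congr_fun measurableSet_Ioi fun x _ => ?_
        simp [Complex.exp_im]
    _ = (-1 / (-z + s * Complex.I)).im := by
        have := integral_im (𝕜 := ℂ) (integrableOn_exp_mul_complex_Ioi ha 0)
        simp only [RCLike.im_to_complex] at this
        rw [this, integral_exp_mul_complex_Ioi ha]
        simp
    _ = s / (z ^ 2 + s ^ 2) := by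
        rw [Complex.div_im, Complex.normSq_apply]
        simp [pow_two, neg_div]

theorem norm_one_sub_cos_mul_mul_exp_div_le (z u : ℝ) {x : ℝ} (hx : 0 < x) :
    ‖(1 - cos (u * x)) * exp (-z * x) / x‖ ≤ |u| * exp (-z * x) := by
  have hcos : |1 - cos (u * x)| ≤ |u| * x := by
    simpa [abs_sub_comm, abs_mul, abs_of_pos hx] using abs_cos_sub_cos_le (u * x) 0
  rw [norm_div, norm_mul, Real.norm_of_nonneg (exp_pos _).le, Real.norm_of_nonneg hx.le,
    div_le_iff₀ hx]
  calc |1 - cos (u * x)| * exp (-z * x) ≤ |u| * x * exp (-z * x) := by gcongr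
    _ = |u| * exp (-z * x) * x := by ring

theorem integrableOn_one_sub_cos_mul_mul_exp_div_Ioi {z : ℝ} (hz : 0 < z) (u : ℝ) :
    IntegrableOn (fun x => (1 - cos (u * x)) * exp (-z * x) / x) (Ioi 0) := by
  refine ((exp_neg_integrableOn_Ioi 0 hz).const_mul |u|).mono'
    (Measurable.aestronglyMeasurable (by fun_prop)) ?_
  filter_upwards [self_mem_ae_restrict measurableSet_Ioi] with x hx
  exact norm_one_sub_cos_mul_mul_exp_div_le z u hx

theorem integrable_comp_abs_of_integrableOn_Ioi {E : Type*} [NormedAddCommGroup E] {f : ℝ → E}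
    (hf : IntegrableOn f (Ioi 0)) : Integrable fun x => f |x| := by
  have hIoi : IntegrableOn (fun x => f |x|) (Ioi 0) :=
    hf.congr_fun (fun x hx => by rw [abs_of_pos hx]) measurableSet_Ioi
  have hIic : IntegrableOn (fun x => f |x|) (Iic 0) := by
    have hneg : MeasurableEmbedding fun x : ℝ => -x := (Homeomorph.neg ℝ).measurableEmbedding
    rw [← Measure.map_neg_eq_self (volume : Measure ℝ), hneg.integrableOn_map_iff]
    simp_rw [Function.comp_def, abs_neg, neg_preimage, neg_Iic, neg_zero]
    exact Iff.mpr integrableOn_Ici_iff_integrableOn_Ioi hIoi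
  rw [← integrableOn_univ, ← Iic_union_Ioi (a := (0 : ℝ))]
  exact hIic.union hIoi

theorem hasDerivAt_integral_one_sub_cos_mul_mul_exp_div_Ioi {z : ℝ} (hz : 0 < z) (u : ℝ) :
    HasDerivAt (fun v => ∫ x in Ioi (0 : ℝ), (1 - cos (v * x)) * exp (-z * x) / x)
      (u / (z ^ 2 + u ^ 2)) u := by
  have hderiv : ∀ x ≠ 0, ∀ v : ℝ, HasDerivAt (fun v => (1 - cos (v * x)) * exp (-z * x) / x)
      (exp (-z * x) * sin (v * x)) v := by
    intro x hx v
    have h := (((hasDerivAt_mul_const (x := v) x).cos.const_sub 1).mul_const (exp (-z * x)))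
    refine (h.div_const x).congr_deriv ?_
    field_simp
  have h := hasDerivAt_integral_of_dominated_loc_of_deriv_le (x₀ := u) (s := univ)
    (F' := fun v x => exp (-z * x) * sin (v * x)) (bound := fun x => exp (-z * x))
    univ_mem (Eventually.of_forall fun v =>
      (integrableOn_one_sub_cos_mul_mul_exp_div_Ioi hz v).aestronglyMeasurable)
    (integrableOn_one_sub_cos_mul_mul_exp_div_Ioi hz u)
    (Measurable.aestronglyMeasurable (by fun_prop))
    (Eventually.of_forall fun x v _ => by
      simpa [abs_of_pos (exp_pos _)] using
        mul_le_of_le_one_right (exp_pos (-z * x)).le (abs_sin_le_one (v * x)))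
    (exp_neg_integrableOn_Ioi 0 hz)
    (by
      filter_upwards [self_mem_ae_restrict measurableSet_Ioi] with x hx v _
      exact hderiv x (ne_of_gt hx) v)
  simpa only [integral_exp_neg_mul_mul_sin_Ioi hz u] using h.2

theorem integral_one_sub_cos_mul_mul_exp_div_Ioi {z : ℝ} (hz : 0 < z) (t : ℝ) :
    ∫ x in Ioi (0 : ℝ), (1 - cos (t * x)) * exp (-z * x) / x = log (1 + t ^ 2 / z ^ 2) / 2 := by
  have hlog (u : ℝ) :
      HasDerivAt (fun v => log (1 + v ^ 2 / z ^ 2) / 2) (u / (z ^ 2 + u ^ 2)) u := by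
    have h := (((hasDerivAt_pow 2 u).div_const (z ^ 2)).const_add 1).log
      (by positivity : 1 + u ^ 2 / z ^ 2 ≠ 0) |>.div_const 2
    refine h.congr_deriv ?_
    field_simp
    ring
  have hdiff := fun u => (hasDerivAt_integral_one_sub_cos_mul_mul_exp_div_Ioi hz u).sub (hlog u)
  have hconst := is_const_of_deriv_eq_zero (fun u => (hdiff u).differentiableAt)
    (fun u => by simpa using (hdiff u).deriv) t 0
  simpa [sub_eq_zero] using hconst

theorem Real.cos_mul_abs (t x : ℝ) : cos (t * |x|) = cos (t * x) := by
  rcases abs_choice x with h | h <;> simp [h]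

theorem integrable_one_sub_cos_mul_mul_exp_abs_div_abs {z : ℝ} (hz : 0 < z) (t : ℝ) :
    Integrable fun x => (1 - cos (t * x)) * exp (-z * |x|) / |x| := by
  simpa only [cos_mul_abs] using
    integrable_comp_abs_of_integrableOn_Ioi (integrableOn_one_sub_cos_mul_mul_exp_div_Ioi hz t)

theorem integral_one_sub_cos_mul_mul_exp_abs_div_abs {z : ℝ} (hz : 0 < z) (t : ℝ) :
    ∫ x, (1 - cos (t * x)) * exp (-z * |x|) / |x| = log (1 + t ^ 2 / z ^ 2) := by
  have h := integral_comp_abs (f := fun y => (1 - cos (t * y)) * exp (-z * y) / y)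
  simp only [cos_mul_abs] at h
  rw [h, integral_one_sub_cos_mul_mul_exp_div_Ioi hz]
  ring

theorem MeasureTheory.integrable_tsum_of_nonneg {α ι : Type*} [MeasurableSpace α] [Countable ι]
    {μ : Measure α} {F : ι → α → ℝ} (hF : ∀ i, Integrable (F i) μ)
    (hF_nonneg : ∀ i, 0 ≤ᵐ[μ] F i) (hF_sum : Summable fun i => ∫ a, F i a ∂μ) :
    Integrable (fun a => ∑' i, F i a) μ := by
  have hlint :
      ∫⁻ a, ∑' i, ENNReal.ofReal (F i a) ∂μ = ENNReal.ofReal (∑' i, ∫ a, F i a ∂μ) := by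
    rw [lintegral_tsum fun i => (hF i).aemeasurable.ennreal_ofReal,
      ENNReal.ofReal_tsum_of_nonneg (fun i => integral_nonneg_of_ae (hF_nonneg i)) hF_sum]
    exact tsum_congr fun i => (ofReal_integral_eq_lintegral_ofReal (hF i) (hF_nonneg i)).symm
  refine (integrable_toReal_of_lintegral_ne_top
    (AEMeasurable.tsum fun i => (hF i).aemeasurable.ennreal_ofReal)
    (hlint ▸ ENNReal.ofReal_ne_top)).congr ?_
  filter_upwards [ae_all_iff.2 hF_nonneg] with a ha
  rw [ENNReal.tsum_toReal_eq fun i => ENNReal.ofReal_ne_top]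
  exact tsum_congr fun i => ENNReal.toReal_ofReal (ha i)

theorem stmt4 (z : ℕ → ℝ) (hz : ∀ k, 0 < z k) (hsum : Summable fun k => 1 / z k ^ 2)
    (t : ℝ) :
    IntegrableOn
      (fun x => (1 - Real.cos (t * x)) * (∑' k : ℕ, Real.exp (-z k * |x|)) / |x|)
      {(0 : ℝ)}ᶜ ∧
    ∏' k : ℕ, (1 + t ^ 2 / z k ^ 2)⁻¹ =
      Real.exp
        (-∫ x in {(0 : ℝ)}ᶜ,
            (1 - Real.cos (t * x)) * (∑' k : ℕ, Real.exp (-z k * |x|)) / |x|) := by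
  set g : ℕ → ℝ → ℝ := fun k x => (1 - cos (t * x)) * exp (-z k * |x|) / |x|
  have hg_int k : Integrable (g k) := integrable_one_sub_cos_mul_mul_exp_abs_div_abs (hz k) t
  have hg_nonneg k x : 0 ≤ g k x :=
    div_nonneg (mul_nonneg (sub_nonneg.2 (cos_le_one _)) (exp_pos _).le) (abs_nonneg x)
  have hg_integral k : ∫ x, g k x = log (1 + t ^ 2 / z k ^ 2) :=
    integral_one_sub_cos_mul_mul_exp_abs_div_abs (hz k) t
  have hg_sum : Summable fun k => ∫ x, g k x := by
    simpa only [hg_integral] using Real.summable_log_one_add_of_summable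
      ((hsum.mul_left (t ^ 2)).congr fun k => by ring)
  have hfun : (fun x => (1 - cos (t * x)) * (∑' k, exp (-z k * |x|)) / |x|) =
      fun x => ∑' k, g k x := by
    ext x
    rw [mul_div_right_comm, ← tsum_mul_left]
    exact tsum_congr fun k => by ring
  have hg_norm_sum : Summable fun k => ∫ x, ‖g k x‖ := by
    simpa only [Real.norm_of_nonneg (hg_nonneg _ _)] using hg_sum
  rw [hfun, IntegrableOn, restrict_compl_singleton,
    ← integral_tsum_of_summable_integral_norm hg_int hg_norm_sum]
  refine ⟨integrable_tsum_of_nonneg hg_int (fun k => .of_forall (hg_nonneg k)) hg_sum, ?_⟩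
  rw [← Real.rexp_tsum_eq_tprod (fun k => by positivity)
    (by simpa only [log_inv, hg_integral] using hg_sum.neg)]
  simp only [log_inv, tsum_neg, hg_integral]
end

section
/- Let ν > -1 and let (z_k)_{k≥1} be positive reals with ∑_{k=1}^∞ 1/z_k² < ∞ such that Γ(ν+1) · h_ν(t²/4) = ∏_{k=1}^∞ (1 + t²/z_k²) for all t ∈ ℝ (i.e., the z_k are the zeros of z^{-ν}J_ν(z)). Then for every t ∈ ℝ, (t²/4) · h_{ν+1}(t²/4) = h_ν(t²/4) · ∫_0^∞ (1 − cos(tx)) · ( ∑_{k=1}^∞ z_k e^{-z_k x} ) dx. In Bessel notation this reads (t/2)·I_{ν+1}(t) = I_ν(t) · ∫_0^∞ (1 − cos tx)(∑_k z_k e^{-z_k x}) dx. -/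
open MeasureTheory

/-- Characteristic function of a measure on ℝ: `t ↦ ∫ e^{itx} dμ(x)`. -/
noncomputable def charFn (μ : Measure ℝ) (t : ℝ) : ℂ :=
  ∫ x, Complex.exp (t * x * Complex.I) ∂μ

/-- `h_ν(u) = ∑_{k=0}^∞ u^k / (k! Γ(ν+k+1))`. -/
noncomputable def hnu (ν : ℝ) (u : ℝ) : ℝ :=
  ∑' k : ℕ, u ^ k / (Nat.factorial k * Real.Gamma (ν + k + 1))

/-- `B_ν(t) = 1/(Γ(ν+1) h_ν(t²/4)) = t^ν/(2^ν Γ(ν+1) I_ν(t))`. -/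
noncomputable def Bnu (ν : ℝ) (t : ℝ) : ℝ :=
  1 / (Real.Gamma (ν + 1) * hnu ν (t ^ 2 / 4))

/-- `b_ν(t) = exp(−(t²/2)·h_{ν+1}(t²/4)/h_ν(t²/4)) = exp(−t·I_{ν+1}(t)/I_ν(t))`. -/
noncomputable def bnu (ν : ℝ) (t : ℝ) : ℝ :=
  Real.exp (-(t ^ 2 / 2) * hnu (ν + 1) (t ^ 2 / 4) / hnu ν (t ^ 2 / 4))

/-- The `n`-fold convolution power of a measure on ℝ. -/
noncomputable def convPow (ρ : Measure ℝ) : ℕ → Measure ℝ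
  | 0 => Measure.dirac 0
  | n + 1 => (convPow ρ n).conv ρ

/-- A probability measure on ℝ is infinitely divisible if for every `n ≥ 1` it is the
`n`-fold convolution of some probability measure. -/
def InfDivisible (μ : Measure ℝ) : Prop :=
  ∀ n : ℕ, 1 ≤ n → ∃ ρ : Measure ℝ, IsProbabilityMeasure ρ ∧ convPow ρ n = μ

/-!
Differentiating `Γ(ν+1) h_ν(s²/4) = ∏ (1 + s²/z_k²)` logarithmically at `s = t`, with
`h_ν' = h_{ν+1}`, gives `(t/2) h_{ν+1}(t²/4) = h_ν(t²/4) ∑ 2t/(z_k² + t²)`. The right-hand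
integral is the same series: `∫₀^∞ (1 - cos tx) c e^{-cx} dx = t²/(c² + t²)` (the real part
of a complex exponential integral), and the series may be integrated termwise because its
terms are nonnegative with summable integrals.
-/

open Real Set Filter
open scoped Nat Topology

section Hnu

variable {ν : ℝ}

lemma Gamma_add_natCast_add_one_pos (hν : -1 < ν) (k : ℕ) : 0 < Gamma (ν + k + 1) :=
  Gamma_pos_of_pos (by linarith [k.cast_nonneg (α := ℝ)])

lemma Gamma_add_natCast_succ_add_one (hν : -1 < ν) (k : ℕ) :
    Gamma (ν + (k + 1 : ℕ) + 1) = (ν + k + 1) * Gamma (ν + k + 1) := by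
  rw [← Gamma_add_one (by linarith [k.cast_nonneg (α := ℝ)])]
  push_cast
  ring_nf

lemma summable_hnu (hν : -1 < ν) (u : ℝ) :
    Summable fun k : ℕ => u ^ k / (k ! * Gamma (ν + k + 1)) := by
  have hratio : Tendsto (fun k : ℕ => |u| / ((k + 1) * (ν + k + 1))) atTop (𝓝 0) := by
    refine tendsto_const_nhds.div_atTop (Tendsto.atTop_mul_atTop₀ ?_ ?_)
    · exact tendsto_atTop_add_const_right _ 1 tendsto_natCast_atTop_atTop
    · simpa only [add_right_comm ν] using
        tendsto_atTop_add_const_left _ (ν + 1) tendsto_natCast_atTop_atTop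
  refine summable_of_ratio_norm_eventually_le (r := 1 / 2) (by norm_num) ?_
  filter_upwards [hratio.eventually (eventually_le_nhds (by norm_num : (0 : ℝ) < 1 / 2))]
    with k hk
  have hΓ := Gamma_add_natCast_add_one_pos hν k
  have hνk : 0 < ν + k + 1 := by linarith [k.cast_nonneg (α := ℝ)]
  have hnext : ‖u ^ (k + 1) / ((k + 1)! * Gamma (ν + (k + 1 : ℕ) + 1))‖ =
      |u| / ((k + 1) * (ν + k + 1)) * ‖u ^ k / (k ! * Gamma (ν + k + 1))‖ := by
    rw [Gamma_add_natCast_succ_add_one hν, Nat.factorial_succ]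
    simp only [norm_div, norm_mul, norm_pow, Real.norm_eq_abs, abs_of_pos hΓ, abs_of_pos hνk,
      Nat.abs_cast]
    push_cast
    field_simp
    ring
  rw [hnext]
  exact mul_le_mul_of_nonneg_right hk (norm_nonneg _)

lemma hnu_deriv_term_succ (hν : -1 < ν) (k : ℕ) (y : ℝ) :
    ((k + 1 : ℕ) : ℝ) * y ^ (k + 1 - 1) / ((k + 1)! * Gamma (ν + (k + 1 : ℕ) + 1)) =
      y ^ k / (k ! * Gamma (ν + 1 + k + 1)) := by
  have hΓ := Gamma_add_natCast_add_one_pos hν k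
  have hνk : ν + k + 1 ≠ 0 := by linarith [k.cast_nonneg (α := ℝ)]
  rw [Gamma_add_natCast_succ_add_one hν, show ν + 1 + k + 1 = ν + k + 1 + 1 by ring,
    Gamma_add_one hνk, Nat.factorial_succ, Nat.add_sub_cancel]
  push_cast
  field_simp

lemma hasDerivAt_hnu (hν : -1 < ν) (u : ℝ) : HasDerivAt (hnu ν) (hnu (ν + 1) u) u := by
  set R := |u| + 1
  let g' : ℕ → ℝ → ℝ := fun k y => k * y ^ (k - 1) / (k ! * Gamma (ν + k + 1))
  have hg' : ∀ k, g' (k + 1) = fun y => y ^ k / (k ! * Gamma (ν + 1 + k + 1)) := fun k =>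
    funext (hnu_deriv_term_succ hν k)
  have hderiv : ∀ k y, y ∈ Metric.ball (0 : ℝ) R →
      HasDerivAt (fun y => y ^ k / (k ! * Gamma (ν + k + 1))) (g' k y) y :=
    fun k y _ => (hasDerivAt_pow k y).div_const _
  have hbound : ∀ k y, y ∈ Metric.ball (0 : ℝ) R → ‖g' k y‖ ≤ g' k R := by
    intro k y hy
    rw [mem_ball_zero_iff, Real.norm_eq_abs] at hy
    have hΓ := Gamma_add_natCast_add_one_pos hν k
    simp only [g', norm_div, norm_mul, norm_pow, Real.norm_eq_abs, Nat.abs_cast,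
      abs_of_pos hΓ]
    gcongr
  have hsummable : Summable fun k => g' k R := by
    rw [← summable_nat_add_iff 1]
    simpa only [hg'] using summable_hnu (by linarith) R
  have hu : u ∈ Metric.ball (0 : ℝ) R := by simp [R]
  have h := hasDerivAt_tsum_of_isPreconnected hsummable Metric.isOpen_ball
    (convex_ball 0 R).isPreconnected hderiv hbound hu (summable_hnu hν u) hu
  rw [(hsummable.of_norm_bounded (fun k => hbound k u hu)).tsum_eq_zero_add] at h
  simp only [hg', show g' 0 u = 0 by simp [g'], zero_add] at h
  exact h

end Hnu

lemma exp_neg_mul_mul_cos_eq_re (t c x : ℝ) :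
    exp (-c * x) * cos (t * x) = RCLike.re (Complex.exp ((-c + t * Complex.I) * x)) := by
  rw [RCLike.re_to_complex, Complex.exp_re]
  simp

lemma integrableOn_exp_neg_mul_mul_cos (t : ℝ) {c : ℝ} (hc : 0 < c) :
    IntegrableOn (fun x => exp (-c * x) * cos (t * x)) (Ioi 0) := by
  simp_rw [exp_neg_mul_mul_cos_eq_re]
  exact (integrableOn_exp_mul_complex_Ioi (by simpa) 0).re

lemma integral_exp_neg_mul_mul_cos (t : ℝ) {c : ℝ} (hc : 0 < c) :
    ∫ x in Ioi (0 : ℝ), exp (-c * x) * cos (t * x) = c / (c ^ 2 + t ^ 2) := by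
  have ha : ((-c : ℂ) + t * Complex.I).re < 0 := by simpa
  simp_rw [exp_neg_mul_mul_cos_eq_re]
  rw [integral_re (integrableOn_exp_mul_complex_Ioi ha 0), integral_exp_mul_complex_Ioi ha 0]
  simp [Complex.div_re, Complex.normSq]
  field_simp

lemma integrableOn_one_sub_cos_mul_exp (t : ℝ) {c : ℝ} (hc : 0 < c) :
    IntegrableOn (fun x => (1 - cos (t * x)) * (c * exp (-c * x))) (Ioi 0) := by
  have h := ((integrableOn_exp_mul_Ioi (neg_lt_zero.2 hc) 0).sub
    (integrableOn_exp_neg_mul_mul_cos t hc)).const_mul c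
  refine IntegrableOn.congr_fun h (fun x _ => ?_) measurableSet_Ioi
  simp only [Pi.sub_apply]
  ring

lemma integral_one_sub_cos_mul_exp (t : ℝ) {c : ℝ} (hc : 0 < c) :
    ∫ x in Ioi (0 : ℝ), (1 - cos (t * x)) * (c * exp (-c * x)) = t ^ 2 / (c ^ 2 + t ^ 2) := by
  have h : ∀ x, (1 - cos (t * x)) * (c * exp (-c * x)) =
      c * (exp (-c * x) - exp (-c * x) * cos (t * x)) := fun x => by ring
  simp_rw [h]
  rw [integral_const_mul, integral_sub (integrableOn_exp_mul_Ioi (neg_lt_zero.2 hc) 0)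
    (integrableOn_exp_neg_mul_mul_cos t hc), integral_exp_mul_Ioi (neg_lt_zero.2 hc),
    integral_exp_neg_mul_mul_cos t hc, mul_zero, exp_zero]
  field_simp
  ring

section Product

variable {z : ℕ → ℝ}

lemma summable_log_one_add_sq_div_sq (hsum : Summable fun k => 1 / z k ^ 2) (s : ℝ) :
    Summable fun k => log (1 + s ^ 2 / z k ^ 2) :=
  Real.summable_log_one_add_of_summable <| (hsum.mul_left (s ^ 2)).congr fun _ => mul_one_div _ _

lemma hasDerivAt_tsum_log_one_add_sq_div_sq (hz : ∀ k, z k ≠ 0)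
    (hsum : Summable fun k => 1 / z k ^ 2) (t : ℝ) :
    HasDerivAt (fun s => ∑' k, log (1 + s ^ 2 / z k ^ 2))
      (∑' k, 2 * t / (z k ^ 2 + t ^ 2)) t := by
  set R := |t| + 1
  have hderiv : ∀ k s, s ∈ Metric.ball (0 : ℝ) R →
      HasDerivAt (fun s => log (1 + s ^ 2 / z k ^ 2)) (2 * s / (z k ^ 2 + s ^ 2)) s := by
    intro k s _
    have hzk := hz k
    convert (((hasDerivAt_pow 2 s).div_const (z k ^ 2)).const_add 1).log (by positivity) using 1
    field_simp
    ring
  have hbound : ∀ k s, s ∈ Metric.ball (0 : ℝ) R →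
      ‖2 * s / (z k ^ 2 + s ^ 2)‖ ≤ 2 * R * (1 / z k ^ 2) := by
    intro k s hs
    rw [mem_ball_zero_iff, Real.norm_eq_abs] at hs
    have hzk := hz k
    simp only [norm_div, norm_mul, Real.norm_eq_abs, abs_two,
      abs_of_pos (by positivity : 0 < z k ^ 2 + s ^ 2), mul_one_div]
    gcongr
    nlinarith [sq_nonneg s]
  have ht : t ∈ Metric.ball (0 : ℝ) R := by simp [R]
  exact hasDerivAt_tsum_of_isPreconnected (hsum.mul_left (2 * R)) Metric.isOpen_ball
    (convex_ball 0 R).isPreconnected hderiv hbound ht (summable_log_one_add_sq_div_sq hsum t) ht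

lemma hasDerivAt_tprod_one_add_sq_div_sq (hz : ∀ k, z k ≠ 0)
    (hsum : Summable fun k => 1 / z k ^ 2) (t : ℝ) :
    HasDerivAt (fun s => ∏' k, (1 + s ^ 2 / z k ^ 2))
      ((∏' k, (1 + t ^ 2 / z k ^ 2)) * ∑' k, 2 * t / (z k ^ 2 + t ^ 2)) t := by
  have hexp : ∀ s, rexp (∑' k, log (1 + s ^ 2 / z k ^ 2)) = ∏' k, (1 + s ^ 2 / z k ^ 2) :=
    fun s => rexp_tsum_eq_tprod (fun k => by positivity) (summable_log_one_add_sq_div_sq hsum s)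
  simpa only [hexp] using (hasDerivAt_tsum_log_one_add_sq_div_sq hz hsum t).exp

lemma integral_one_sub_cos_mul_tsum_exp (hz : ∀ k, 0 < z k)
    (hsum : Summable fun k => 1 / z k ^ 2) (t : ℝ) :
    ∫ x in Ioi (0 : ℝ), (1 - cos (t * x)) * ∑' k, z k * exp (-z k * x) =
      ∑' k, t ^ 2 / (z k ^ 2 + t ^ 2) := by
  have hnonneg : ∀ k x, 0 ≤ (1 - cos (t * x)) * (z k * exp (-z k * x)) := fun k x =>
    mul_nonneg (sub_nonneg.2 (cos_le_one _)) (mul_nonneg (hz k).le (exp_pos _).le)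
  have hnorm : ∀ k, ∫ x in Ioi (0 : ℝ), ‖(1 - cos (t * x)) * (z k * exp (-z k * x))‖ =
      t ^ 2 / (z k ^ 2 + t ^ 2) := fun k => by
    simp only [Real.norm_of_nonneg (hnonneg k _), integral_one_sub_cos_mul_exp t (hz k)]
  have hsummable : Summable fun k => t ^ 2 / (z k ^ 2 + t ^ 2) := by
    refine Summable.of_nonneg_of_le (fun k => by positivity) (fun k => ?_)
      ((hsum.mul_left (t ^ 2)).congr fun _ => mul_one_div _ _)
    have := hz k
    gcongr
    nlinarith [sq_nonneg t]
  simp_rw [← tsum_mul_left]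
  rw [← integral_tsum_of_summable_integral_norm
    (fun k => integrableOn_one_sub_cos_mul_exp t (hz k)) (by simpa only [hnorm] using hsummable)]
  exact tsum_congr fun k => integral_one_sub_cos_mul_exp t (hz k)

end Product

theorem stmt8 (ν : ℝ) (hν : -1 < ν) (z : ℕ → ℝ) (hz : ∀ k, 0 < z k)
    (hsum : Summable fun k => 1 / z k ^ 2)
    (hfact : ∀ t : ℝ,
      Real.Gamma (ν + 1) * hnu ν (t ^ 2 / 4) = ∏' k : ℕ, (1 + t ^ 2 / z k ^ 2))
    (t : ℝ) :
    t ^ 2 / 4 * hnu (ν + 1) (t ^ 2 / 4) =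
      hnu ν (t ^ 2 / 4) *
        ∫ x in Set.Ioi (0 : ℝ),
          (1 - Real.cos (t * x)) * ∑' k : ℕ, z k * Real.exp (-z k * x) := by
  have hΓ : Gamma (ν + 1) ≠ 0 := (Gamma_pos_of_pos (by linarith)).ne'
  have hsq : HasDerivAt (fun s : ℝ => s ^ 2 / 4) (t / 2) t :=
    ((hasDerivAt_pow 2 t).div_const 4).congr_deriv (by push_cast; ring)
  have hleft := ((hasDerivAt_hnu hν (t ^ 2 / 4)).comp t hsq).const_mul (Gamma (ν + 1))
  simp_rw [Function.comp_def, hfact] at hleft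
  have hlogDeriv := hleft.unique (hasDerivAt_tprod_one_add_sq_div_sq (fun k => (hz k).ne') hsum t)
  rw [← hfact t, mul_assoc, mul_right_inj' hΓ] at hlogDeriv
  rw [integral_one_sub_cos_mul_tsum_exp hz hsum t]
  calc t ^ 2 / 4 * hnu (ν + 1) (t ^ 2 / 4) = t / 2 * (hnu (ν + 1) (t ^ 2 / 4) * (t / 2)) := by
        ring
    _ = hnu ν (t ^ 2 / 4) * ∑' k, t / 2 * (2 * t / (z k ^ 2 + t ^ 2)) := by
        rw [hlogDeriv, tsum_mul_left]
        ring
    _ = hnu ν (t ^ 2 / 4) * ∑' k, t ^ 2 / (z k ^ 2 + t ^ 2) := by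
        congr 1
        exact tsum_congr fun k => by ring
end

section
/- If μ is an infinitely divisible probability measure on ℝ, then its characteristic function has no real zeros: for every t ∈ ℝ, ∫ e^{itx} dμ(x) ≠ 0. -/
open MeasureTheory

section Aux

open Complex

lemma charFn_zero_eq_one (μ : Measure ℝ) [IsProbabilityMeasure μ] : charFn μ 0 = 1 := by
  simp [charFn]

lemma continuous_charFn (μ : Measure ℝ) [IsProbabilityMeasure μ] :
    Continuous (charFn μ) := by
  apply continuous_of_dominated (bound := fun _ : ℝ => (1 : ℝ))
  · intro t
    exact (Continuous.aestronglyMeasurable (by continuity :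
      Continuous fun x : ℝ => Complex.exp (t * x * Complex.I)))
  · intro t
    filter_upwards with x
    rw [show ((t : ℂ) * x * I) = ((t * x : ℝ) : ℂ) * I by push_cast; ring,
      Complex.norm_exp_ofReal_mul_I]
  · exact integrable_const 1
  · filter_upwards with x
    exact Complex.continuous_exp.comp (by continuity)

lemma charFn_conv (μ ν : Measure ℝ) [IsProbabilityMeasure μ] [IsProbabilityMeasure ν] (t : ℝ) :
    charFn (μ.conv ν) t = charFn μ t * charFn ν t := by
  unfold charFn Measure.conv
  rw [integral_map (by fun_prop)
    (Continuous.aestronglyMeasurable (by continuity :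
      Continuous fun x : ℝ => Complex.exp (t * x * Complex.I)))]
  have : ∀ p : ℝ × ℝ, Complex.exp (t * ↑(p.1 + p.2) * Complex.I)
      = Complex.exp (t * p.1 * Complex.I) * Complex.exp (t * p.2 * Complex.I) := by
    intro p
    rw [← Complex.exp_add]
    push_cast
    ring_nf
  simp_rw [this]
  exact integral_prod_mul (μ := μ) (ν := ν) (fun x => Complex.exp (t * x * Complex.I))
    (fun y => Complex.exp (t * y * Complex.I))

/-- `|φ_ρ(s)|² = ∫∫ cos(s(x−y))`. -/
lemma normSq_charFn_eq (ρ : Measure ℝ) [IsProbabilityMeasure ρ] (s : ℝ) :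
    (Complex.normSq (charFn ρ s) : ℝ)
      = ∫ p : ℝ × ℝ, Real.cos (s * (p.1 - p.2)) ∂(ρ.prod ρ) := by
  have h1 : (Complex.normSq (charFn ρ s) : ℂ) = charFn ρ s * (starRingEnd ℂ) (charFn ρ s) :=
    (Complex.mul_conj _).symm
  have h2 : (starRingEnd ℂ) (charFn ρ s) = ∫ y, Complex.exp (-(s * y) * Complex.I) ∂ρ := by
    unfold charFn
    rw [← integral_conj]
    congr 1
    funext y
    rw [← Complex.exp_conj]
    congr 1
    rw [map_mul, map_mul, Complex.conj_I, Complex.conj_ofReal, Complex.conj_ofReal]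
    ring
  have h3 : charFn ρ s * (starRingEnd ℂ) (charFn ρ s)
      = ∫ p : ℝ × ℝ, Complex.exp ((s * (p.1 - p.2) : ℝ) * Complex.I) ∂(ρ.prod ρ) := by
    rw [h2]
    unfold charFn
    rw [← integral_prod_mul (μ := ρ) (ν := ρ) (fun x => Complex.exp (s * x * Complex.I))
      (fun y => Complex.exp (-(s * y) * Complex.I))]
    congr 1
    funext p
    rw [← Complex.exp_add]
    congr 1
    push_cast
    ring
  have hint : Integrable (fun p : ℝ × ℝ => Complex.exp ((s * (p.1 - p.2) : ℝ) * Complex.I))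
      (ρ.prod ρ) := by
    apply Integrable.mono' (integrable_const (1 : ℝ))
    · exact (Continuous.aestronglyMeasurable (by continuity))
    · filter_upwards with p
      rw [Complex.norm_exp_ofReal_mul_I]
  have h4 : Complex.normSq (charFn ρ s)
      = (∫ p : ℝ × ℝ, Complex.exp ((s * (p.1 - p.2) : ℝ) * Complex.I) ∂(ρ.prod ρ)).re := by
    have := congrArg Complex.re (h1.trans h3)
    simpa using this
  have h5 := integral_re hint
  simp only [RCLike.re_to_complex] at h5
  rw [h4, ← h5]
  congr 1
  funext p
  exact Complex.exp_ofReal_mul_I_re _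

lemma integrable_cos_aux (ρ : Measure ℝ) [IsProbabilityMeasure ρ] (a : ℝ) :
    Integrable (fun p : ℝ × ℝ => Real.cos (a * (p.1 - p.2))) (ρ.prod ρ) := by
  apply Integrable.mono' (integrable_const (1 : ℝ))
  · exact (Continuous.aestronglyMeasurable (by continuity))
  · filter_upwards with p
    rw [Real.norm_eq_abs]
    exact Real.abs_cos_le_one _

/-- Key inequality: `1 − |φ(2s)|² ≤ 4 (1 − |φ(s)|²)`. -/
lemma key_ineq (ρ : Measure ℝ) [IsProbabilityMeasure ρ] (s : ℝ) :
    1 - Complex.normSq (charFn ρ (2 * s)) ≤ 4 * (1 - Complex.normSq (charFn ρ s)) := by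
  rw [normSq_charFn_eq, normSq_charFn_eq]
  have hA : ∫ p : ℝ × ℝ, (1 - Real.cos (2 * s * (p.1 - p.2))) ∂(ρ.prod ρ)
      = 1 - ∫ p : ℝ × ℝ, Real.cos (2 * s * (p.1 - p.2)) ∂(ρ.prod ρ) := by
    rw [integral_sub (integrable_const 1) (integrable_cos_aux ρ (2 * s))]
    simp
  have hB : ∫ p : ℝ × ℝ, 4 * (1 - Real.cos (s * (p.1 - p.2))) ∂(ρ.prod ρ)
      = 4 * (1 - ∫ p : ℝ × ℝ, Real.cos (s * (p.1 - p.2)) ∂(ρ.prod ρ)) := by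
    rw [integral_const_mul, integral_sub (integrable_const 1) (integrable_cos_aux ρ s)]
    simp
  rw [← hA, ← hB]
  apply integral_mono ((integrable_const 1).sub (integrable_cos_aux ρ (2 * s)))
    (((integrable_const 1).sub (integrable_cos_aux ρ s)).const_mul 4)
  intro p
  have h2 : Real.cos (2 * s * (p.1 - p.2)) = 2 * Real.cos (s * (p.1 - p.2)) ^ 2 - 1 := by
    rw [show 2 * s * (p.1 - p.2) = 2 * (s * (p.1 - p.2)) by ring, Real.cos_two_mul]
  have h3 := Real.neg_one_le_cos (s * (p.1 - p.2))
  have h4 := Real.cos_le_one (s * (p.1 - p.2))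
  simp only [Pi.sub_apply]
  nlinarith

lemma isProb_convPow (ρ : Measure ℝ) [IsProbabilityMeasure ρ] (n : ℕ) :
    IsProbabilityMeasure (convPow ρ n) := by
  induction n with
  | zero => exact Measure.dirac.isProbabilityMeasure
  | succ n ih =>
    haveI := ih
    exact Measure.probabilitymeasure_of_probabilitymeasures_conv _ _

lemma charFn_convPow (ρ : Measure ℝ) [IsProbabilityMeasure ρ] (n : ℕ) (t : ℝ) :
    charFn (convPow ρ n) t = (charFn ρ t) ^ n := by
  induction n with
  | zero => simp [convPow, charFn]
  | succ n ih =>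
    haveI := isProb_convPow ρ n
    rw [convPow, charFn_conv, ih, pow_succ]

end Aux

theorem stmt13 (μ : Measure ℝ) [IsProbabilityMeasure μ] (hμ : InfDivisible μ) (t : ℝ) :
    charFn μ t ≠ 0 := by
  by_contra h
  -- The zero set of charFn within the closed ball of radius |t|
  set K : Set ℝ := {s : ℝ | charFn μ s = 0} ∩ Metric.closedBall 0 |t| with hK
  have hKc : IsCompact K := by
    apply (Metric.isCompact_of_isClosed_isBounded ?_ ?_)
    · exact (isClosed_singleton.preimage (continuous_charFn μ)).inter Metric.isClosed_closedBall
    · exact Metric.isBounded_closedBall.subset Set.inter_subset_right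
  have htK : t ∈ K := ⟨h, by rw [Metric.mem_closedBall, Real.dist_eq, sub_zero]⟩
  obtain ⟨t₀, ht₀K, hmin⟩ := hKc.exists_isMinOn ⟨t, htK⟩ continuous_abs.continuousOn
  have ht₀0 : charFn μ t₀ = 0 := ht₀K.1
  have ht₀ne : t₀ ≠ 0 := by
    intro h0
    rw [h0, charFn_zero_eq_one] at ht₀0
    exact one_ne_zero ht₀0
  have ht₀pos : 0 < |t₀| := abs_pos.mpr ht₀ne
  -- charFn μ (t₀/2) ≠ 0 by minimality
  have hhalf : charFn μ (t₀ / 2) ≠ 0 := by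
    intro h2
    have hbd : |t₀| ≤ |t| := by
      have h6 := ht₀K.2
      rw [Metric.mem_closedBall, Real.dist_eq, sub_zero] at h6
      exact h6
    have hmem : t₀ / 2 ∈ K := by
      refine ⟨h2, ?_⟩
      rw [Metric.mem_closedBall, Real.dist_eq, sub_zero, abs_div, _root_.abs_two]
      linarith
    have h5 : |t₀| ≤ |t₀ / 2| := hmin hmem
    rw [abs_div, _root_.abs_two] at h5
    linarith
  set c : ℝ := Complex.normSq (charFn μ (t₀ / 2)) with hc
  have hcpos : 0 < c := Complex.normSq_pos.mpr hhalf
  obtain ⟨n, hn⟩ := exists_pow_lt_of_lt_one hcpos (show (3/4 : ℝ) < 1 by norm_num)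
  set m := n + 1 with hm
  have hnm : ((3:ℝ)/4) ^ m ≤ (3/4) ^ n :=
    pow_le_pow_of_le_one (by norm_num) (by norm_num) (Nat.le_succ n)
  obtain ⟨ρ, hρprob, hρconv⟩ := hμ m (Nat.le_add_left 1 n)
  haveI := hρprob
  have hrel : ∀ s : ℝ, Complex.normSq (charFn μ s) = (Complex.normSq (charFn ρ s)) ^ m := by
    intro s
    rw [← hρconv, charFn_convPow, map_pow]
  have hψt₀ : Complex.normSq (charFn ρ t₀) = 0 := by
    have h0 : (Complex.normSq (charFn ρ t₀)) ^ m = 0 := by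
      rw [← hrel, ht₀0, map_zero]
    exact pow_eq_zero_iff (by omega) |>.mp h0
  have hkey := key_ineq ρ (t₀ / 2)
  rw [show 2 * (t₀ / 2) = t₀ by ring, hψt₀] at hkey
  have hψhalf : Complex.normSq (charFn ρ (t₀ / 2)) ≤ 3/4 := by linarith
  have hfinal : c ≤ (3/4 : ℝ) ^ m := by
    rw [hc, hrel]
    exact pow_le_pow_left₀ (Complex.normSq_nonneg _) hψhalf m
  linarith [lt_of_le_of_lt hnm hn]
end
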